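/- arXiv:1107.4184 — 2 statements merged into one kernel-verified Lean document; each statement's English description precedes it below -/
import Mathlib

section
/- Let λ, β ∈ ℝ, T > 0, and a₀, a₁ ∈ ℝ. Let ā : [0, T] → ℝ be differentiable with ā′(t) = −λ ā(t) + β ā(t) − ā(t)³ on [0, T] and ā(0) = a₀. Then there exists a constant C ≥ 0 (depending only on λ, β, T, a₀, a₁) such that for every ν ∈ (0, 1] and every twice-differentiable a : [0, T] → ℝ satisfying ν a″(t) + a′(t) = −λ a(t) + β a(t) − a(t)³ on [0, T] with a(0) = a₀ and a′(0) = a₁, one has sup_{t ∈ [0, T]} |a(t) − ā(t)| ≤ C·ν. -/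
/-! The energy `ν a'² / 2 + a⁴ / 4 - c a² / 2`, `c = β - λ`, is nonincreasing, which bounds `a`
uniformly in `ν ≤ 1`; then `a'` is bounded as well, since `ν a'' + a' = f(a)` relaxes `a'` towards a
bounded forcing. The corrected error `a + ν a' - ā` has derivative `f(a) - f(ā)`, free of the
singular term, and starts at `ν a₁`, so Gronwall with the Lipschitz constant of `f` on a common
bound for `a` and `ā` makes it `O(ν)`; the correction `ν a'` is `O(ν)` too. -/

open Set Real

def cubicForce (c x : ℝ) : ℝ := c * x - x ^ 3

noncomputable def cubicPotential (c x : ℝ) : ℝ := x ^ 4 / 4 - c * x ^ 2 / 2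

theorem hasDerivAt_cubicPotential (c x : ℝ) :
    HasDerivAt (cubicPotential c) (-cubicForce c x) x := by
  have h : HasDerivAt (fun y => y ^ 4 / 4 - c * y ^ 2 / 2) _ x :=
    ((hasDerivAt_pow 4 x).div_const 4).sub (((hasDerivAt_pow 2 x).const_mul c).div_const 2)
  exact h.congr_deriv (by simp only [cubicForce]; push_cast; ring)

theorem abs_le_of_cubicPotential_le {c x E : ℝ} (h : cubicPotential c x ≤ E) :
    |x| ≤ max 1 (8 * E + 4 * c ^ 2) := by
  have h4 : x ^ 4 ≤ 8 * E + 4 * c ^ 2 := by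
    unfold cubicPotential at h
    nlinarith [sq_nonneg (x ^ 2 - 2 * c)]
  rcases le_or_gt |x| 1 with hx | hx
  · exact le_max_of_le_left hx
  · refine le_max_of_le_right (le_trans ?_ h4)
    calc |x| = |x| ^ 1 := (pow_one _).symm
      _ ≤ |x| ^ 4 := pow_le_pow_right₀ hx.le (by norm_num)
      _ = x ^ 4 := by rw [pow_abs, abs_of_nonneg (by positivity)]

theorem abs_cubicForce_le {c x R : ℝ} (hx : |x| ≤ R) : |cubicForce c x| ≤ (|c| + R ^ 2) * R := by
  have hx2 : x ^ 2 ≤ R ^ 2 := sq_le_sq' (abs_le.mp hx).1 (abs_le.mp hx).2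
  calc |cubicForce c x| = |c - x ^ 2| * |x| := by
        rw [← abs_mul]; congr 1; unfold cubicForce; ring
    _ ≤ (|c| + R ^ 2) * R := by
        gcongr
        exact (abs_sub _ _).trans (by rw [abs_of_nonneg (sq_nonneg x)]; linarith)

theorem abs_cubicForce_sub_le {c x y R : ℝ} (hx : |x| ≤ R) (hy : |y| ≤ R) :
    |cubicForce c x - cubicForce c y| ≤ (|c| + 3 * R ^ 2) * |x - y| := by
  have hR : 0 ≤ R := (abs_nonneg x).trans hx
  have hx2 : x ^ 2 ≤ R ^ 2 := sq_le_sq' (abs_le.mp hx).1 (abs_le.mp hx).2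
  have hy2 : y ^ 2 ≤ R ^ 2 := sq_le_sq' (abs_le.mp hy).1 (abs_le.mp hy).2
  have hxy : |x * y| ≤ R ^ 2 := by rw [abs_mul, sq]; exact mul_le_mul hx hy (abs_nonneg _) hR
  have hq : |x ^ 2 + x * y + y ^ 2| ≤ 3 * R ^ 2 := by
    have := abs_add_three (x ^ 2) (x * y) (y ^ 2)
    rw [abs_of_nonneg (sq_nonneg x), abs_of_nonneg (sq_nonneg y)] at this
    linarith
  calc |cubicForce c x - cubicForce c y| = |c - (x ^ 2 + x * y + y ^ 2)| * |x - y| := by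
        rw [← abs_mul]; congr 1; unfold cubicForce; ring
    _ ≤ (|c| + 3 * R ^ 2) * |x - y| := by
        gcongr
        exact (abs_sub _ _).trans (by linarith)

theorem gronwallBound_add_div_eq {δ K ε : ℝ} (hK : K ≠ 0) (x : ℝ) :
    gronwallBound δ K ε x + ε / K = (δ + ε / K) * exp (K * x) := by
  rw [gronwallBound_of_K_ne_0 hK]; ring

theorem damped_energy_le_initial {ν T : ℝ} {f V a a' a'' : ℝ → ℝ} (hV : ∀ x, HasDerivAt V (-f x) x)
    (ha : ∀ t ∈ Icc 0 T, HasDerivAt a (a' t) t) (ha' : ∀ t ∈ Icc 0 T, HasDerivAt a' (a'' t) t)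
    (heq : ∀ t ∈ Icc 0 T, ν * a'' t + a' t = f (a t)) :
    ∀ t ∈ Icc 0 T, ν * a' t ^ 2 / 2 + V (a t) ≤ ν * a' 0 ^ 2 / 2 + V (a 0) := by
  have hE : ∀ t ∈ Icc 0 T,
      HasDerivAt (fun s => ν * a' s ^ 2 / 2 + V (a s)) (-a' t ^ 2) t := fun t ht =>
    ((((ha' t ht).pow 2).const_mul ν).div_const 2).add ((hV (a t)).comp t (ha t ht))
      |>.congr_deriv (by push_cast; linear_combination a' t * heq t ht)
  have hanti : AntitoneOn (fun s => ν * a' s ^ 2 / 2 + V (a s)) (Icc 0 T) :=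
    antitoneOn_of_hasDerivWithinAt_nonpos (convex_Icc 0 T)
      (fun t ht => (hE t ht).continuousAt.continuousWithinAt)
      (fun t ht => (hE t (interior_subset ht)).hasDerivWithinAt)
      (fun t _ => neg_nonpos.mpr (sq_nonneg _))
  exact fun t ht => hanti ⟨le_rfl, ht.1.trans ht.2⟩ ht ht.1

theorem abs_le_of_damped_cubic {ν c T : ℝ} (hν : ν ∈ Ioc 0 1) {a a' a'' : ℝ → ℝ}
    (ha : ∀ t ∈ Icc 0 T, HasDerivAt a (a' t) t) (ha' : ∀ t ∈ Icc 0 T, HasDerivAt a' (a'' t) t)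
    (heq : ∀ t ∈ Icc 0 T, ν * a'' t + a' t = cubicForce c (a t)) :
    ∀ t ∈ Icc 0 T, |a t| ≤ max 1 (8 * (a' 0 ^ 2 / 2 + cubicPotential c (a 0)) + 4 * c ^ 2) := by
  intro t ht
  have hE := damped_energy_le_initial (hasDerivAt_cubicPotential c) ha ha' heq t ht
  refine abs_le_of_cubicPotential_le ?_
  nlinarith [hν.1, hν.2, sq_nonneg (a' t), sq_nonneg (a' 0)]

/-- Along the exponential weight `exp (t / ν)` the relaxation `ν y' + y = g` integrates to
a convex combination of `y 0` and values of `g`. -/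
theorem abs_le_of_relaxation {ν K T : ℝ} (hν : 0 < ν) {y y' g : ℝ → ℝ}
    (hy : ∀ t ∈ Icc 0 T, HasDerivAt y (y' t) t) (heq : ∀ t ∈ Icc 0 T, ν * y' t + y t = g t)
    (hg : ∀ t ∈ Icc 0 T, |g t| ≤ K) :
    ∀ t ∈ Icc 0 T, |y t| ≤ |y 0| + K := by
  intro t ht
  have hK : 0 ≤ K := (abs_nonneg _).trans (hg 0 ⟨le_rfl, ht.1.trans ht.2⟩)
  have hexp : ∀ s, HasDerivAt (fun s => exp (s / ν)) (exp (s / ν) / ν) s := fun s =>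
    ((hasDerivAt_id s).div_const ν).exp.congr_deriv (by simp [div_eq_mul_inv])
  have hw : ∀ s ∈ Icc 0 T,
      HasDerivAt (fun s => exp (s / ν) * y s) (exp (s / ν) / ν * g s) s := fun s hs =>
    ((hexp s).mul (hy s hs)).congr_deriv (by rw [← heq s hs]; field_simp; ring)
  have hB : ∀ s, HasDerivAt (fun s => |y 0| + K * (exp (s / ν) - 1)) (K * (exp (s / ν) / ν)) s :=
    fun s => (((hexp s).sub_const 1).const_mul K).const_add _
  have hbound := image_norm_le_of_norm_deriv_right_le_deriv_boundary
    (fun s hs => (hw s hs).continuousAt.continuousWithinAt)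
    (fun s hs => (hw s (Ico_subset_Icc_self hs)).hasDerivWithinAt)
    (by simp) hB
    (fun s hs => by
      rw [norm_mul, Real.norm_eq_abs, abs_of_pos (by positivity), mul_comm]
      exact mul_le_mul_of_nonneg_right (hg s (Ico_subset_Icc_self hs)) (by positivity)) ht
  have h1 : 1 ≤ exp (t / ν) := one_le_exp (div_nonneg ht.1 hν.le)
  simp only [norm_mul, Real.norm_eq_abs, abs_of_pos (exp_pos _)] at hbound
  nlinarith [abs_nonneg (y 0), exp_pos (t / ν)]

theorem abs_sub_le_of_hasDerivAt_corrected {f : ℝ → ℝ} {ν L R B T : ℝ} (hν : 0 ≤ ν) (hL : 0 < L)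
    (hf : ∀ x y, |x| ≤ R → |y| ≤ R → |f x - f y| ≤ L * |x - y|) {u u' ū : ℝ → ℝ}
    (hv : ∀ t ∈ Icc 0 T, HasDerivAt (fun s => u s + ν * u' s - ū s) (f (u t) - f (ū t)) t)
    (hu : ∀ t ∈ Icc 0 T, |u t| ≤ R) (hū : ∀ t ∈ Icc 0 T, |ū t| ≤ R)
    (hu' : ∀ t ∈ Icc 0 T, |u' t| ≤ B) (h0 : u 0 = ū 0) :
    ∀ t ∈ Icc 0 T, |u t - ū t| ≤ ν * ((|u' 0| + B) * exp (L * T)) := by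
  set v := fun s => u s + ν * u' s - ū s
  have hsplit : ∀ s ∈ Icc 0 T, |u s - ū s| ≤ |v s| + ν * B := fun s hs => by
    calc |u s - ū s| = |v s - ν * u' s| := by simp only [v]; ring_nf
      _ ≤ |v s| + |ν * u' s| := abs_sub _ _
      _ ≤ |v s| + ν * B := by rw [abs_mul, abs_of_nonneg hν]; gcongr; exact hu' s hs
  have hv0 : ‖v 0‖ ≤ ν * |u' 0| := by
    simp [v, h0, abs_of_nonneg hν]
  have hgronwall := norm_le_gronwallBound_of_norm_deriv_right_le
    (fun s hs => (hv s hs).continuousAt.continuousWithinAt)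
    (fun s hs => (hv s (Ico_subset_Icc_self hs)).hasDerivWithinAt) hv0
    (ε := L * (ν * B)) (K := L) (fun s hs => by
      have hs' := Ico_subset_Icc_self hs
      simp only [Real.norm_eq_abs]
      calc |f (u s) - f (ū s)| ≤ L * |u s - ū s| := hf _ _ (hu s hs') (hū s hs')
        _ ≤ L * (|v s| + ν * B) := by gcongr; exact hsplit s hs'
        _ = L * |v s| + L * (ν * B) := by ring)
  intro t ht
  have hLt : L * (t - 0) ≤ L * T := by gcongr; linarith [ht.2]
  calc |u t - ū t| ≤ |v t| + ν * B := hsplit t ht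
    _ ≤ gronwallBound (ν * |u' 0|) L (L * (ν * B)) (t - 0) + L * (ν * B) / L := by
        rw [mul_div_cancel_left₀ _ hL.ne']
        exact add_le_add_left (hgronwall t ht) _
    _ = ν * ((|u' 0| + B) * exp (L * (t - 0))) := by
        rw [gronwallBound_add_div_eq hL.ne', mul_div_cancel_left₀ _ hL.ne']; ring
    _ ≤ ν * ((|u' 0| + B) * exp (L * T)) := by
        have hB : 0 ≤ B := (abs_nonneg _).trans (hu' 0 ⟨le_rfl, ht.1.trans ht.2⟩)
        gcongr

theorem singular_limit_deterministic_general
    (lam β T a₀ a₁ : ℝ) (abar : ℝ → ℝ)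
    (habar : ∀ t ∈ Icc (0:ℝ) T,
      HasDerivAt abar (-lam * abar t + β * abar t - (abar t) ^ 3) t)
    (habar0 : abar 0 = a₀) :
    ∃ C : ℝ, 0 ≤ C ∧
      ∀ ν ∈ Ioc (0:ℝ) 1, ∀ a a' a'' : ℝ → ℝ,
        (∀ t ∈ Icc (0:ℝ) T, HasDerivAt a (a' t) t) →
        (∀ t ∈ Icc (0:ℝ) T, HasDerivAt a' (a'' t) t) →
        (∀ t ∈ Icc (0:ℝ) T,
          ν * a'' t + a' t = -lam * a t + β * a t - (a t) ^ 3) →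
        a 0 = a₀ → a' 0 = a₁ →
        ∀ t ∈ Icc (0:ℝ) T, |a t - abar t| ≤ C * ν := by
  set c := β - lam
  have hforce (x : ℝ) : -lam * x + β * x - x ^ 3 = cubicForce c x := by
    simp only [cubicForce, c]; ring
  simp only [hforce] at habar ⊢
  obtain ⟨Mbar, hMbar⟩ := isCompact_Icc.exists_bound_of_continuousOn
    fun t ht => (habar t ht).continuousAt.continuousWithinAt
  set M := max 1 (8 * (a₁ ^ 2 / 2 + cubicPotential c a₀) + 4 * c ^ 2)
  set B := |a₁| + (|c| + M ^ 2) * M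
  set R := max M Mbar
  set L := |c| + 3 * R ^ 2 + 1
  refine ⟨(|a₁| + B) * exp (L * T), by positivity, ?_⟩
  rintro ν hν a a' a'' ha ha' heq ha0 ha'0
  have haM : ∀ t ∈ Icc 0 T, |a t| ≤ M := by
    simpa only [ha0, ha'0] using abs_le_of_damped_cubic hν ha ha' heq
  have ha'B : ∀ t ∈ Icc 0 T, |a' t| ≤ B := by
    simpa only [ha'0] using
      abs_le_of_relaxation hν.1 ha' heq fun s hs => abs_cubicForce_le (haM s hs)
  have hcorrected : ∀ t ∈ Icc 0 T, HasDerivAt (fun s => a s + ν * a' s - abar s)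
      (cubicForce c (a t) - cubicForce c (abar t)) t := fun t ht =>
    ((ha t ht).add ((ha' t ht).const_mul ν)).sub (habar t ht) |>.congr_deriv
      (by rw [← heq t ht]; ring)
  have hLip (x y : ℝ) (hx : |x| ≤ R) (hy : |y| ≤ R) :
      |cubicForce c x - cubicForce c y| ≤ L * |x - y| :=
    (abs_cubicForce_sub_le hx hy).trans (by gcongr; linarith)
  intro t ht
  have herror := abs_sub_le_of_hasDerivAt_corrected hν.1.le (by positivity) hLip hcorrected
    (fun s hs => (haM s hs).trans (le_max_left _ _))
    (fun s hs => (Real.norm_eq_abs _ ▸ hMbar s hs).trans (le_max_right _ _)) ha'B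
    (ha0.trans habar0.symm) t ht
  rw [ha'0] at herror
  linarith

/-- **Deterministic single-mode averaging with error `O(ν)`.**
Let `λ, β ∈ ℝ`, `T > 0`, `a₀ a₁ ∈ ℝ`, and let `ā` solve the limit equation
`ā' = -λ ā + β ā - ā³` on `[0, T]` with `ā 0 = a₀`.  Then there is `C ≥ 0`
(depending only on `λ, β, T, a₀, a₁`) such that for every `ν ∈ (0, 1]` and
every twice differentiable `a` with `ν a'' + a' = -λ a + β a - a³` on `[0, T]`,
`a 0 = a₀` and `a' 0 = a₁`, one has `sup_{[0,T]} |a - ā| ≤ C ν`. -/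
theorem singular_limit_deterministic
    (lam β T a₀ a₁ : ℝ) (hT : 0 < T) (abar : ℝ → ℝ)
    (habar : ∀ t ∈ Icc (0:ℝ) T,
      HasDerivAt abar (-lam * abar t + β * abar t - (abar t) ^ 3) t)
    (habar0 : abar 0 = a₀) :
    ∃ C : ℝ, 0 ≤ C ∧
      ∀ ν ∈ Ioc (0:ℝ) 1, ∀ a a' a'' : ℝ → ℝ,
        (∀ t ∈ Icc (0:ℝ) T, HasDerivAt a (a' t) t) →
        (∀ t ∈ Icc (0:ℝ) T, HasDerivAt a' (a'' t) t) →
        (∀ t ∈ Icc (0:ℝ) T,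
          ν * a'' t + a' t = -lam * a t + β * a t - (a t) ^ 3) →
        a 0 = a₀ → a' 0 = a₁ →
        ∀ t ∈ Icc (0:ℝ) T, |a t - abar t| ≤ C * ν :=
  singular_limit_deterministic_general lam β T a₀ a₁ abar habar habar0
end

section
/- Let E₀, E₁, E be real Banach spaces, i : E₁ →L E and j : E →L E₀ injective continuous linear maps (continuous embeddings E₁ ⊂ E ⊂ E₀) such that j ∘ i : E₁ →L E₀ is a compact operator, and suppose there exist θ ∈ (0, 1) and M ≥ 0 with ‖i u‖_E ≤ M·‖j(i u)‖_{E₀}^{1−θ}·‖u‖_{E₁}^{θ} for all u ∈ E₁. Let T > 0 and p₀, p₁ ∈ [1, ∞] satisfy 1 − θ > (1 − θ)/p₀ + θ/p₁. Let R ≥ 0 and let V be a set of functions v : [0, T] → E₁ such that for every v ∈ V: (a) v ∈ L^{p₁}(0, T; E₁) with ‖v‖_{L^{p₁}(0,T;E₁)} ≤ R, and (b) there exists w′ ∈ L^{p₀}(0, T; E₀) with ‖w′‖_{L^{p₀}(0,T;E₀)} ≤ R and j(i(v(t))) = j(i(v(0))) + ∫₀ᵗ w′(s) ds for all t ∈ [0,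 T]. Then the set {t ↦ i(v(t)) : v ∈ V} is relatively compact (totally bounded) in C([0, T]; E) with the supremum norm. -/
/-!
Compactness comes from Arzelà–Ascoli: the family `t ↦ i (v t)` is uniformly Hölder continuous
into `E` and pointwise totally bounded. Both follow from one estimate. Since `v` is bounded in
`L^{p₁}`, every window of length `h` contains a point `s` with `‖v s‖ ≲ h^{-1/p₁}`, and the
derivative bound makes `j ∘ i ∘ v` Hölder of exponent `1 - 1/p₀`. The interpolation inequality
turns two such points at distance `≲ h` into `‖i (v s) - i (v s')‖ ≲ h^δ` with
`δ = (1 - θ)(1 - 1/p₀) - θ/p₁ > 0`. Chaining good points at the dyadic scales `h 2⁻ⁿ` towards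
`t` gives a Cauchy sequence in `E` whose limit is `i (v t)` (as `j` is injective), so `i (v t)`
lies within `O(h^δ)` of the image of a ball of `E₁`, which is totally bounded because `j ∘ i` is
compact and the interpolation inequality controls `E` by `E₀` on bounded sets of `E₁`.
-/

open MeasureTheory Set Filter Topology
open scoped ENNReal NNReal

theorem Equicontinuous.totallyBounded_range_uniformFun {ι X α : Type*} [TopologicalSpace X]
    [CompactSpace X] [UniformSpace α] [CompleteSpace α] {F : ι → X → α}
    (hF : Equicontinuous F) (hF' : ∀ x, TotallyBounded (range fun k => F k x)) :
    TotallyBounded (range fun k => UniformFun.ofFun (F k)) := by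
  -- On an equicontinuous family, uniform and pointwise convergence induce the same uniformity.
  let : UniformSpace ι := (Pi.uniformSpace _).comap F
  have hF_ind : IsUniformInducing F := isUniformInducing_iff_uniformSpace.2 rfl
  have hpi : TotallyBounded (range F) :=
    (isCompact_univ_pi fun x => (hF' x).closure.isCompact_of_isClosed isClosed_closure)
      |>.totallyBounded.subset
      (range_subset_iff.2 fun k => mem_univ_pi.2 fun x => subset_closure (mem_range_self k))
  rw [← image_univ, totallyBounded_image_iff hF_ind] at hpi
  rw [← image_univ, ← Function.comp_def, totallyBounded_image_iff
    (hF.isUniformInducing_uniformFun_iff_pi.2 hF_ind)]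
  exact hpi

theorem totallyBounded_of_forall_exists_dist_lt {α : Type*} [PseudoMetricSpace α] {s : Set α}
    (h : ∀ ε > 0, ∃ t, TotallyBounded t ∧ ∀ x ∈ s, ∃ y ∈ t, dist x y < ε) :
    TotallyBounded s := by
  refine Metric.totallyBounded_iff.2 fun ε hε => ?_
  obtain ⟨t, ht, hst⟩ := h (ε / 2) (half_pos hε)
  obtain ⟨c, hc, htc⟩ := Metric.totallyBounded_iff.1 ht (ε / 2) (half_pos hε)
  refine ⟨c, hc, fun x hx => ?_⟩
  obtain ⟨y, hy, hxy⟩ := hst x hx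
  obtain ⟨z, hz, hyz⟩ := mem_iUnion₂.1 (htc hy)
  exact mem_iUnion₂.2 ⟨z, hz, by rw [Metric.mem_ball] at *; linarith [dist_triangle x y z]⟩

theorem totallyBounded_range_of_continuity_modulus {X Y Z : Type*} [PseudoMetricSpace Y]
    [PseudoMetricSpace Z] {f : X → Y} {g : X → Z} (hg : TotallyBounded (range g))
    (b : ℝ → ℝ) (hb : Tendsto b (𝓝 0) (𝓝 0))
    (H : ∀ x x', dist (f x) (f x') ≤ b (dist (g x) (g x'))) :
    TotallyBounded (range f) := by
  refine Metric.totallyBounded_iff.2 fun ε hε => ?_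
  obtain ⟨η, hη, hbη⟩ := Metric.tendsto_nhds_nhds.1 hb ε hε
  obtain ⟨t, hts, ht, hcover⟩ := Metric.finite_approx_of_totallyBounded hg η hη
  rw [← image_univ] at hts hcover
  obtain ⟨u, -, hu, hcover⟩ := (exists_subset_image_finite_and
    (p := fun t => g '' univ ⊆ ⋃ y ∈ t, Metric.ball y η)).1 ⟨t, hts, ht, hcover⟩
  refine ⟨f '' u, hu.image f, ?_⟩
  rintro _ ⟨x, rfl⟩
  obtain ⟨_, ⟨x', hx', rfl⟩, hxx'⟩ := mem_iUnion₂.1 (hcover (mem_image_of_mem g (mem_univ x)))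
  refine mem_iUnion₂.2 ⟨f x', mem_image_of_mem f hx', ?_⟩
  have hd := hbη (x := dist (g x) (g x')) (by simpa [abs_of_nonneg dist_nonneg] using hxx')
  rw [Real.dist_0_eq_abs] at hd
  exact (H x x').trans_lt ((le_abs_self _).trans_lt hd)

theorem dist_le_of_le_geometric_of_tendsto_comp {X Y : Type*} [PseudoMetricSpace X]
    [CompleteSpace X] [TopologicalSpace Y] [T2Space Y] {g : X → Y} (hg : Continuous g)
    (hinj : Function.Injective g) {f : ℕ → X} {x : X} {C r : ℝ} (hr : r < 1)
    (hf : ∀ n, dist (f n) (f (n + 1)) ≤ C * r ^ n) (hfx : Tendsto (g ∘ f) atTop (𝓝 (g x))) :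
    dist (f 0) x ≤ C / (1 - r) := by
  obtain ⟨y, hy⟩ := cauchySeq_tendsto_of_complete (cauchySeq_of_le_geometric r C hr hf)
  rw [← hinj (tendsto_nhds_unique ((hg.tendsto y).comp hy) hfx)]
  exact dist_le_of_le_geometric_of_tendsto₀ r C hr hf hy

theorem exists_mem_norm_le_of_eLpNorm_lt {α F : Type*} [MeasurableSpace α] [NormedAddCommGroup F]
    {μ : Measure α} {s : Set α} {f : α → F} {p : ℝ≥0∞} (hp : p ≠ 0) (hs : MeasurableSet s)
    (hμs : μ s ≠ 0) {c : ℝ} (hc : 0 ≤ c)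
    (hf : eLpNorm f p (μ.restrict s) < ENNReal.ofReal c * μ s ^ p.toReal⁻¹) :
    ∃ x ∈ s, ‖f x‖ ≤ c := by
  by_contra! h
  have hmono : eLpNorm (fun _ => c) p (μ.restrict s) ≤ eLpNorm f p (μ.restrict s) :=
    eLpNorm_mono_ae <| (ae_restrict_iff' hs).2 <| .of_forall fun x hx => by
      rw [Real.norm_of_nonneg hc]; exact (h x hx).le
  rw [eLpNorm_const c hp (by rwa [Ne, Measure.restrict_eq_zero]), Measure.restrict_apply_univ,
    Real.enorm_of_nonneg hc, one_div] at hmono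
  exact (hmono.trans_lt hf).false

-- For `p = ∞` the exponent `-p.toReal⁻¹` is `-(0 : ℝ)⁻¹ = 0`, which is the right value.
theorem exists_near_norm_le_of_eLpNorm_le {F : Type*} [NormedAddCommGroup F] {v : ℝ → F}
    {p : ℝ≥0∞} (hp : p ≠ 0) {a b R : ℝ} (hR : 0 ≤ R)
    (hv : eLpNorm v p (volume.restrict (Icc a b)) ≤ ENNReal.ofReal R)
    {t h : ℝ} (ht : t ∈ Icc a b) (hh : 0 < h) (hhab : h ≤ b - a) :
    ∃ s ∈ Icc a b, |s - t| ≤ h ∧ ‖v s‖ ≤ (R + 1) * h ^ (-p.toReal⁻¹) := by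
  set c := min t (b - h)
  have hsub : Icc c (c + h) ⊆ Icc a b :=
    Icc_subset_Icc (le_min ht.1 (by linarith)) (by linarith [min_le_right t (b - h)])
  have hbound : eLpNorm v p (volume.restrict (Icc c (c + h)))
      < ENNReal.ofReal ((R + 1) * h ^ (-p.toReal⁻¹)) * volume (Icc c (c + h)) ^ p.toReal⁻¹ := by
    rw [Real.volume_Icc, add_sub_cancel_left, ENNReal.ofReal_rpow_of_pos hh,
      ← ENNReal.ofReal_mul (by positivity), mul_assoc, ← Real.rpow_add hh, neg_add_cancel,
      Real.rpow_zero, mul_one]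
    calc eLpNorm v p (volume.restrict (Icc c (c + h)))
        ≤ eLpNorm v p (volume.restrict (Icc a b)) :=
          eLpNorm_mono_measure v (Measure.restrict_mono hsub le_rfl)
      _ ≤ ENNReal.ofReal R := hv
      _ < ENNReal.ofReal (R + 1) := (ENNReal.ofReal_lt_ofReal_iff (by linarith)).2 (by linarith)
  obtain ⟨s, hs, hvs⟩ := exists_mem_norm_le_of_eLpNorm_lt hp measurableSet_Icc
    (by simp [hh]) (by positivity) hbound
  have hc : t - h ≤ c := le_min (by linarith) (by linarith [ht.2])
  refine ⟨s, hsub hs, abs_le.2 ⟨?_, ?_⟩, hvs⟩ <;> linarith [hs.1, hs.2, min_le_left t (b - h)]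

theorem norm_setIntegral_le_of_eLpNorm_le {α F : Type*} [MeasurableSpace α]
    [NormedAddCommGroup F] [NormedSpace ℝ F] {μ : Measure α} {s : Set α} {f : α → F}
    {p : ℝ≥0∞} (hp : 1 ≤ p) (hf : AEStronglyMeasurable f (μ.restrict s)) (hμs : μ s ≠ ∞)
    {R : ℝ} (hR : 0 ≤ R) (hfR : eLpNorm f p (μ.restrict s) ≤ ENNReal.ofReal R) :
    ‖∫ x in s, f x ∂μ‖ ≤ R * μ.real s ^ (1 - p.toReal⁻¹) := by
  have hL1 : eLpNorm f 1 (μ.restrict s) ≤ ENNReal.ofReal R * μ s ^ (1 - p.toReal⁻¹) := by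
    calc eLpNorm f 1 (μ.restrict s)
        ≤ eLpNorm f p (μ.restrict s) *
            (μ.restrict s) univ ^ (1 / (1 : ℝ≥0∞).toReal - 1 / p.toReal) :=
          eLpNorm_le_eLpNorm_mul_rpow_measure_univ hp hf
      _ ≤ ENNReal.ofReal R * μ s ^ (1 - p.toReal⁻¹) := by
          rw [Measure.restrict_apply_univ]; simp only [ENNReal.toReal_one, one_div, inv_one]
          gcongr
  have hα : 0 ≤ 1 - p.toReal⁻¹ := by
    rw [sub_nonneg, ← ENNReal.toReal_inv]
    exact ENNReal.toReal_le_of_le_ofReal zero_le_one (by simpa using ENNReal.inv_le_one.2 hp)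
  have hfin : ENNReal.ofReal R * μ s ^ (1 - p.toReal⁻¹) ≠ ∞ :=
    ENNReal.mul_ne_top ENNReal.ofReal_ne_top (ENNReal.rpow_ne_top_of_nonneg hα hμs)
  calc ‖∫ x in s, f x ∂μ‖ ≤ ∫ x in s, ‖f x‖ ∂μ := norm_integral_le_integral_norm _
    _ = (eLpNorm f 1 (μ.restrict s)).toReal := by
        rw [eLpNorm_one_eq_lintegral_enorm, integral_norm_eq_lintegral_enorm hf]
    _ ≤ (ENNReal.ofReal R * μ s ^ (1 - p.toReal⁻¹)).toReal := ENNReal.toReal_mono hfin hL1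
    _ = R * μ.real s ^ (1 - p.toReal⁻¹) := by
        rw [ENNReal.toReal_mul, ← ENNReal.toReal_rpow, ENNReal.toReal_ofReal hR, measureReal_def]

theorem norm_sub_le_of_eq_add_intervalIntegral {F : Type*} [NormedAddCommGroup F]
    [NormedSpace ℝ F] {g w : ℝ → F} {p : ℝ≥0∞} (hp : 1 ≤ p) {a b R : ℝ} (hR : 0 ≤ R)
    (hw : MemLp w p (volume.restrict (Icc a b)))
    (hwR : eLpNorm w p (volume.restrict (Icc a b)) ≤ ENNReal.ofReal R)
    (hg : ∀ t ∈ Icc a b, g t = g a + ∫ s in a..t, w s) {x y : ℝ} (hx : x ∈ Icc a b)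
    (hy : y ∈ Icc a b) : ‖g x - g y‖ ≤ R * |x - y| ^ (1 - p.toReal⁻¹) := by
  wlog hxy : y ≤ x generalizing x y
  · rw [norm_sub_rev, abs_sub_comm]; exact this hy hx (le_of_not_ge hxy)
  have hsub : ∀ {c d}, c ∈ Icc a b → d ∈ Icc a b → Ioc c d ⊆ Icc a b := fun hc hd _ hz =>
    ⟨hc.1.trans hz.1.le, hz.2.trans hd.2⟩
  have hint : ∀ z ∈ Icc a b, IntervalIntegrable w volume a z := fun z hz =>
    (intervalIntegrable_iff_integrableOn_Ioc_of_le hz.1).2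
      (IntegrableOn.mono_set (hw.integrable hp) (hsub (left_mem_Icc.2 (hz.1.trans hz.2)) hz))
  rw [hg x hx, hg y hy, add_sub_add_left_eq_sub,
    intervalIntegral.integral_interval_sub_left (hint x hx) (hint y hy),
    intervalIntegral.integral_of_le hxy, abs_of_nonneg (sub_nonneg.2 hxy)]
  have hle := Measure.restrict_mono (hsub hy hx) (le_refl volume)
  have := norm_setIntegral_le_of_eLpNorm_le hp (hw.1.mono_measure hle) measure_Ioc_lt_top.ne hR
    ((eLpNorm_mono_measure w hle).trans hwR)
  rwa [Real.volume_real_Ioc_of_le hxy] at this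

section Interpolation

variable {E₀ E E₁ : Type*} [NormedAddCommGroup E₀] [NormedSpace ℝ E₀]
  [NormedAddCommGroup E] [NormedSpace ℝ E] [NormedAddCommGroup E₁] [NormedSpace ℝ E₁]
  (i : E₁ →L[ℝ] E) (j : E →L[ℝ] E₀) {θ M : ℝ}

theorem totallyBounded_image_closedBall_of_interpolation
    (hcompact : IsCompactOperator fun u : E₁ => j (i u)) (hθ : θ ∈ Ico (0 : ℝ) 1)
    (hM : 0 ≤ M) (hinterp : ∀ u : E₁, ‖i u‖ ≤ M * ‖j (i u)‖ ^ (1 - θ) * ‖u‖ ^ θ) (ρ : ℝ) :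
    TotallyBounded (i '' Metric.closedBall 0 ρ) := by
  obtain ⟨K, hK, hsub⟩ := IsCompactOperator.image_closedBall_subset_compact
    (f := (j.comp i).toLinearMap) hcompact ρ
  rw [image_eq_range]
  refine totallyBounded_range_of_continuity_modulus
    (g := fun u : Metric.closedBall (0 : E₁) ρ => j (i u)) (hK.totallyBounded.subset ?_)
    (fun r => M * r ^ (1 - θ) * (2 * ρ) ^ θ) ?_ fun u u' => ?_
  · rintro _ ⟨u, rfl⟩; exact hsub ⟨u, u.2, rfl⟩
  · simpa using
      ((tendsto_id.rpow_const_nhds_zero (sub_pos.2 hθ.2)).const_mul M).mul_const ((2 * ρ) ^ θ)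
  · have hu : ‖(u : E₁) - u'‖ ≤ 2 * ρ := by
      linarith [norm_sub_le (u : E₁) u', mem_closedBall_zero_iff.1 u.2,
        mem_closedBall_zero_iff.1 u'.2]
    simp only [dist_eq_norm, ← map_sub]
    calc ‖i (u - u')‖ ≤ M * ‖j (i (u - u'))‖ ^ (1 - θ) * ‖(u : E₁) - u'‖ ^ θ := hinterp _
      _ ≤ _ := by gcongr; exact hθ.1

theorem norm_sub_le_mul_rpow_of_interpolation (hθ : θ ∈ Icc (0 : ℝ) 1) (hM : 0 ≤ M)
    (hinterp : ∀ u : E₁, ‖i u‖ ≤ M * ‖j (i u)‖ ^ (1 - θ) * ‖u‖ ^ θ) {u u' : E₁}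
    {a b x α q : ℝ} (hx : 0 < x) (ha : ‖j (i u) - j (i u')‖ ≤ a * x ^ α)
    (hb : ‖u‖ + ‖u'‖ ≤ b * x ^ (-q)) :
    ‖i u - i u'‖ ≤ M * a ^ (1 - θ) * b ^ θ * x ^ ((1 - θ) * α - θ * q) := by
  have ha₀ : 0 ≤ a := nonneg_of_mul_nonneg_left ((norm_nonneg _).trans ha) (by positivity)
  have hb₀ : 0 ≤ b :=
    nonneg_of_mul_nonneg_left ((add_nonneg (norm_nonneg u) (norm_nonneg u')).trans hb)
      (by positivity)
  calc ‖i u - i u'‖ = ‖i (u - u')‖ := by rw [map_sub]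
    _ ≤ M * ‖j (i (u - u'))‖ ^ (1 - θ) * ‖u - u'‖ ^ θ := hinterp _
    _ ≤ M * (a * x ^ α) ^ (1 - θ) * (b * x ^ (-q)) ^ θ := by
        rw [map_sub, map_sub]
        have := sub_nonneg.2 hθ.2
        have := hθ.1
        gcongr
        exact (norm_sub_le u u').trans hb
    _ = M * a ^ (1 - θ) * b ^ θ * x ^ ((1 - θ) * α - θ * q) := by
        rw [show (1 - θ) * α - θ * q = α * (1 - θ) + -q * θ by ring, Real.rpow_add hx,
          Real.mul_rpow ha₀ (by positivity), Real.mul_rpow hb₀ (by positivity),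
          ← Real.rpow_mul hx.le, ← Real.rpow_mul hx.le]
        ring

theorem norm_sub_le_mul_rpow_of_holder (hθ : θ ∈ Icc (0 : ℝ) 1) (hM : 0 ≤ M)
    (hinterp : ∀ u : E₁, ‖i u‖ ≤ M * ‖j (i u)‖ ^ (1 - θ) * ‖u‖ ^ θ) {v : ℝ → E₁}
    {T R α q b c x : ℝ} (hR : 0 ≤ R) (hα : 0 ≤ α) (hc : 0 ≤ c) (hx : 0 < x)
    (hg : ∀ x ∈ Icc 0 T, ∀ y ∈ Icc 0 T, ‖j (i (v x)) - j (i (v y))‖ ≤ R * |x - y| ^ α)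
    {s s' : ℝ} (hs : s ∈ Icc 0 T) (hs' : s' ∈ Icc 0 T) (hss' : |s - s'| ≤ c * x)
    (hv : ‖v s‖ + ‖v s'‖ ≤ b * x ^ (-q)) :
    ‖i (v s) - i (v s')‖ ≤ M * (R * c ^ α) ^ (1 - θ) * b ^ θ * x ^ ((1 - θ) * α - θ * q) := by
  refine norm_sub_le_mul_rpow_of_interpolation i j hθ hM hinterp hx ?_ hv
  calc ‖j (i (v s)) - j (i (v s'))‖ ≤ R * |s - s'| ^ α := hg s hs s' hs'
    _ ≤ R * (c * x) ^ α := by gcongr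
    _ = R * c ^ α * x ^ α := by rw [Real.mul_rpow hc hx.le, mul_assoc]

theorem exists_near_norm_sub_le_of_interpolation [CompleteSpace E] (hj : Function.Injective j)
    (hθ : θ ∈ Icc (0 : ℝ) 1) (hM : 0 ≤ M)
    (hinterp : ∀ u : E₁, ‖i u‖ ≤ M * ‖j (i u)‖ ^ (1 - θ) * ‖u‖ ^ θ) {v : ℝ → E₁}
    {T R K α q : ℝ} (hR : 0 ≤ R) (hα : 0 < α) (hδ : 0 < (1 - θ) * α - θ * q)
    (hg : ∀ x ∈ Icc 0 T, ∀ y ∈ Icc 0 T, ‖j (i (v x)) - j (i (v y))‖ ≤ R * |x - y| ^ α)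
    {t : ℝ} (ht : t ∈ Icc 0 T)
    (hgood : ∀ h, 0 < h → h ≤ T → ∃ s ∈ Icc 0 T, |s - t| ≤ h ∧ ‖v s‖ ≤ K * h ^ (-q))
    {h : ℝ} (hh : 0 < h) (hhT : h ≤ T) :
    ∃ s ∈ Icc 0 T, |s - t| ≤ h ∧ ‖v s‖ ≤ K * h ^ (-q) ∧
      ‖i (v t) - i (v s)‖ ≤ M * (R * 2 ^ α) ^ (1 - θ) * (K * (1 + 2 ^ q)) ^ θ /
        (1 - 2⁻¹ ^ ((1 - θ) * α - θ * q)) * h ^ ((1 - θ) * α - θ * q) := by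
  set δ := (1 - θ) * α - θ * q
  set σ : ℕ → ℝ := fun n => h * 2⁻¹ ^ n
  have hσ : ∀ n, 0 < σ n ∧ σ n ≤ T := fun n =>
    ⟨by positivity,
      (mul_le_of_le_one_right hh.le (pow_le_one₀ (by norm_num) (by norm_num))).trans hhT⟩
  have hσ_succ : ∀ n, σ (n + 1) = σ n * 2⁻¹ := fun n => by simp only [σ, pow_succ, mul_assoc]
  choose s hsT hst hsv using fun n => hgood (σ n) (hσ n).1 (hσ n).2
  have hstep : ∀ n, dist (i (v (s n))) (i (v (s (n + 1))))
      ≤ M * (R * 2 ^ α) ^ (1 - θ) * (K * (1 + 2 ^ q)) ^ θ * h ^ δ * (2⁻¹ ^ δ) ^ n := by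
    intro n
    have hdist : |s n - s (n + 1)| ≤ 2 * σ n := by
      have := abs_sub_le (s n) t (s (n + 1))
      rw [abs_sub_comm t] at this
      linarith [hst n, hst (n + 1), hσ_succ n, (hσ n).1]
    have hnorm : ‖v (s n)‖ + ‖v (s (n + 1))‖ ≤ K * (1 + 2 ^ q) * σ n ^ (-q) := by
      have h_succ := hsv (n + 1)
      rw [hσ_succ, Real.mul_rpow (hσ n).1.le (by norm_num),
        Real.rpow_neg (by norm_num : (0 : ℝ) ≤ 2⁻¹), Real.inv_rpow (by norm_num), inv_inv] at h_succ
      linarith [hsv n]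
    rw [dist_eq_norm]
    refine (norm_sub_le_mul_rpow_of_holder i j hθ hM hinterp hR hα.le zero_le_two (hσ n).1 hg
      (hsT n) (hsT (n + 1)) hdist hnorm).trans_eq ?_
    rw [Real.mul_rpow hh.le (by positivity), ← Real.rpow_pow_comm (by norm_num)]
    ring
  have hlim : Tendsto (fun n => j (i (v (s n)))) atTop (𝓝 (j (i (v t)))) := by
    have hst0 : Tendsto (fun n => |s n - t|) atTop (𝓝 0) :=
      squeeze_zero (fun n => abs_nonneg _) hst <| by
        simpa only [mul_zero] using (tendsto_pow_atTop_nhds_zero_of_lt_one (by norm_num)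
          (by norm_num : (2⁻¹ : ℝ) < 1)).const_mul h
    refine tendsto_iff_norm_sub_tendsto_zero.2
      (squeeze_zero (fun n => norm_nonneg _) (fun n => hg _ (hsT n) _ ht) ?_)
    simpa using (hst0.rpow_const_nhds_zero hα).const_mul R
  refine ⟨s 0, hsT 0, by simpa [σ] using hst 0, by simpa [σ] using hsv 0, ?_⟩
  rw [norm_sub_rev, ← dist_eq_norm]
  exact (dist_le_of_le_geometric_of_tendsto_comp j.continuous hj
    (Real.rpow_lt_one (by norm_num) (by norm_num) hδ) hstep hlim).trans_eq (by ring)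

theorem norm_sub_le_mul_abs_sub_rpow_of_interpolation (hθ : θ ∈ Icc (0 : ℝ) 1) (hM : 0 ≤ M)
    (hinterp : ∀ u : E₁, ‖i u‖ ≤ M * ‖j (i u)‖ ^ (1 - θ) * ‖u‖ ^ θ) {v : ℝ → E₁}
    {T R K α q C : ℝ} (hR : 0 ≤ R) (hα : 0 ≤ α) (hδ : 0 < (1 - θ) * α - θ * q)
    (hg : ∀ x ∈ Icc 0 T, ∀ y ∈ Icc 0 T, ‖j (i (v x)) - j (i (v y))‖ ≤ R * |x - y| ^ α)
    (happrox : ∀ t ∈ Icc 0 T, ∀ h, 0 < h → h ≤ T → ∃ s ∈ Icc 0 T, |s - t| ≤ h ∧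
      ‖v s‖ ≤ K * h ^ (-q) ∧ ‖i (v t) - i (v s)‖ ≤ C * h ^ ((1 - θ) * α - θ * q))
    {t t' : ℝ} (ht : t ∈ Icc 0 T) (ht' : t' ∈ Icc 0 T) :
    ‖i (v t) - i (v t')‖ ≤
      (2 * C + M * (R * 3 ^ α) ^ (1 - θ) * (2 * K) ^ θ) * |t - t'| ^ ((1 - θ) * α - θ * q) := by
  rcases eq_or_ne t t' with rfl | hne
  · simp [Real.zero_rpow hδ.ne']
  set h := |t - t'|
  have hh : 0 < h := abs_pos.2 (sub_ne_zero.2 hne)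
  have hhT : h ≤ T := abs_sub_le_iff.2 ⟨by linarith [ht.2, ht'.1], by linarith [ht.1, ht'.2]⟩
  obtain ⟨s, hs, hst, hsv, hts⟩ := happrox t ht h hh hhT
  obtain ⟨s', hs', hst', hsv', hts'⟩ := happrox t' ht' h hh hhT
  have hss' : |s - s'| ≤ 3 * h := by
    have := abs_sub_le s t s'
    have := abs_sub_le t t' s'
    rw [abs_sub_comm t' s'] at this
    linarith
  have hmid := norm_sub_le_mul_rpow_of_holder i j hθ hM hinterp hR hα (by norm_num) hh hg hs hs'
    hss' (b := 2 * K) (by linarith)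
  have h₁ := norm_sub_le_norm_sub_add_norm_sub (i (v t)) (i (v s)) (i (v t'))
  have h₂ := norm_sub_le_norm_sub_add_norm_sub (i (v s)) (i (v s')) (i (v t'))
  rw [norm_sub_rev (i (v s'))] at h₂
  linarith

theorem totallyBounded_range_uniformFun_of_interpolation [CompleteSpace E]
    (hj : Function.Injective j) (hcompact : IsCompactOperator fun u : E₁ => j (i u))
    (hθ : θ ∈ Ioo (0 : ℝ) 1) (hM : 0 ≤ M)
    (hinterp : ∀ u : E₁, ‖i u‖ ≤ M * ‖j (i u)‖ ^ (1 - θ) * ‖u‖ ^ θ) {ι : Type*}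
    {v : ι → ℝ → E₁} {T R K α q : ℝ} (hT : 0 < T) (hR : 0 ≤ R) (hα : 0 < α)
    (hδ : 0 < (1 - θ) * α - θ * q)
    (hg : ∀ k, ∀ x ∈ Icc 0 T, ∀ y ∈ Icc 0 T, ‖j (i (v k x)) - j (i (v k y))‖ ≤ R * |x - y| ^ α)
    (hgood : ∀ k, ∀ t ∈ Icc 0 T, ∀ h, 0 < h → h ≤ T →
      ∃ s ∈ Icc 0 T, |s - t| ≤ h ∧ ‖v k s‖ ≤ K * h ^ (-q)) :
    TotallyBounded (range fun k => UniformFun.ofFun fun t : Icc (0 : ℝ) T => i (v k t)) := by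
  set C := M * (R * 2 ^ α) ^ (1 - θ) * (K * (1 + 2 ^ q)) ^ θ / (1 - 2⁻¹ ^ ((1 - θ) * α - θ * q))
  have happrox : ∀ k, ∀ t ∈ Icc 0 T, ∀ h, 0 < h → h ≤ T → ∃ s ∈ Icc 0 T, |s - t| ≤ h ∧
      ‖v k s‖ ≤ K * h ^ (-q) ∧ ‖i (v k t) - i (v k s)‖ ≤ C * h ^ ((1 - θ) * α - θ * q) :=
    fun k t ht h hh hhT => exists_near_norm_sub_le_of_interpolation i j hj (Ioo_subset_Icc_self hθ)
      hM hinterp hR hα hδ (hg k) ht (hgood k t ht) hh hhT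
  have hpow : Tendsto (fun r : ℝ => r ^ ((1 - θ) * α - θ * q)) (𝓝 0) (𝓝 0) :=
    tendsto_id.rpow_const_nhds_zero hδ
  refine Equicontinuous.totallyBounded_range_uniformFun ?_ fun t => ?_
  · have hmod := hpow.const_mul (2 * C + M * (R * 3 ^ α) ^ (1 - θ) * (2 * K) ^ θ)
    rw [mul_zero] at hmod
    refine Metric.equicontinuous_of_continuity_modulus _ hmod _ fun t t' k => ?_
    rw [dist_eq_norm, Subtype.dist_eq, Real.dist_eq]
    exact norm_sub_le_mul_abs_sub_rpow_of_interpolation i j (Ioo_subset_Icc_self hθ) hM hinterp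
      hR hα.le hδ (hg k) (happrox k) t.2 t'.2
  · refine totallyBounded_of_forall_exists_dist_lt fun ε hε => ?_
    have hlim : Tendsto (fun r => C * r ^ ((1 - θ) * α - θ * q)) (𝓝[>] 0) (𝓝 0) := by
      simpa using (hpow.const_mul C).mono_left nhdsWithin_le_nhds
    obtain ⟨h, hCh, hh, hhT⟩ := ((hlim.eventually (gt_mem_nhds hε)).and (Ioc_mem_nhdsGT hT)).exists
    refine ⟨i '' Metric.closedBall 0 (K * h ^ (-q)),
      totallyBounded_image_closedBall_of_interpolation i j hcompact (Ioo_subset_Ico_self hθ) hM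
        hinterp _, ?_⟩
    rintro _ ⟨k, rfl⟩
    obtain ⟨s, -, -, hsv, hts⟩ := happrox k t t.2 h hh hhT
    exact ⟨i (v k s), mem_image_of_mem i (mem_closedBall_zero_iff.2 hsv),
      by rw [dist_eq_norm]; exact hts.trans_lt hCh⟩

end Interpolation

theorem simon_compactness_general
    {E₀ E E₁ : Type*}
    [NormedAddCommGroup E₀] [NormedSpace ℝ E₀]
    [NormedAddCommGroup E] [NormedSpace ℝ E] [CompleteSpace E]
    [NormedAddCommGroup E₁] [NormedSpace ℝ E₁]
    (i : E₁ →L[ℝ] E) (j : E →L[ℝ] E₀)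
    (hj : Function.Injective j)
    (hcompact : IsCompactOperator fun u : E₁ => j (i u))
    (θ M : ℝ) (hθ : θ ∈ Set.Ioo (0:ℝ) 1) (hM : 0 ≤ M)
    (hinterp : ∀ u : E₁, ‖i u‖ ≤ M * ‖j (i u)‖ ^ (1 - θ) * ‖u‖ ^ θ)
    (T : ℝ) (hT : 0 < T) (p₀ p₁ : ℝ≥0∞) (hp₀ : 1 ≤ p₀) (hp₁ : 1 ≤ p₁)
    (hpθ : (1 - θ) * (p₀.toReal)⁻¹ + θ * (p₁.toReal)⁻¹ < 1 - θ)
    (R : ℝ) (hR : 0 ≤ R) (V : Set (ℝ → E₁))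
    (hV : ∀ v ∈ V,
      (MemLp v p₁ (volume.restrict (Icc (0:ℝ) T)) ∧
        eLpNorm v p₁ (volume.restrict (Icc (0:ℝ) T)) ≤ ENNReal.ofReal R) ∧
      ∃ w' : ℝ → E₀,
        MemLp w' p₀ (volume.restrict (Icc (0:ℝ) T)) ∧
        eLpNorm w' p₀ (volume.restrict (Icc (0:ℝ) T)) ≤ ENNReal.ofReal R ∧
        ∀ t ∈ Icc (0:ℝ) T,
          j (i (v t)) = j (i (v 0)) + ∫ s in (0:ℝ)..t, w' s) :
    TotallyBounded
      ((fun v : ℝ → E₁ =>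
          UniformFun.ofFun (fun t : Icc (0:ℝ) T => i (v ↑t))) '' V) := by
  have hδ : 0 < (1 - θ) * (1 - p₀.toReal⁻¹) - θ * p₁.toReal⁻¹ := by linarith
  have hα : 0 < 1 - p₀.toReal⁻¹ := by
    have : 0 ≤ θ * p₁.toReal⁻¹ := mul_nonneg hθ.1.le (inv_nonneg.2 ENNReal.toReal_nonneg)
    nlinarith [hθ.2]
  rw [image_eq_range]
  refine totallyBounded_range_uniformFun_of_interpolation i j hj hcompact hθ hM hinterp
    (v := fun v : V => (v : ℝ → E₁)) (K := R + 1) hT hR hα hδ (fun v x hx y hy => ?_)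
    (fun v t ht h hh hhT => ?_)
  · obtain ⟨-, w', hw', hw'R, hvw'⟩ := hV v v.2
    exact norm_sub_le_of_eq_add_intervalIntegral hp₀ hR hw' hw'R hvw' hx hy
  · exact exists_near_norm_le_of_eLpNorm_le (zero_lt_one.trans_le hp₁).ne' hR (hV v v.2).1.2 ht hh
      (by rwa [sub_zero])

/-- **Simon's compactness lemma (Lemma 2.1 of the paper).**
Let `E₁ ⊂ E ⊂ E₀` be real Banach spaces, the embeddings realised by injective
continuous linear maps `i : E₁ →L E` and `j : E →L E₀` with `j ∘ i` compact,
and suppose the interpolation inequality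
`‖i u‖ ≤ M ‖j (i u)‖^{1-θ} ‖u‖^θ` holds with `θ ∈ (0,1)`.  Let `T > 0` and
`p₀, p₁ ∈ [1, ∞]` with `1 - θ > (1-θ)/p₀ + θ/p₁`.  If `V` is a set of
functions `v : [0,T] → E₁` bounded by `R` in `L^{p₁}(0,T;E₁)` whose
distributional derivatives (in `E₀`) are bounded by `R` in `L^{p₀}(0,T;E₀)`,
then `{t ↦ i (v t) : v ∈ V}` is relatively compact (totally bounded) in
`C([0,T];E)` with the supremum norm (i.e. for the uniform-convergence
uniformity on functions `[0,T] → E`). -/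
theorem simon_compactness
    {E₀ E E₁ : Type*}
    [NormedAddCommGroup E₀] [NormedSpace ℝ E₀] [CompleteSpace E₀]
    [NormedAddCommGroup E] [NormedSpace ℝ E] [CompleteSpace E]
    [NormedAddCommGroup E₁] [NormedSpace ℝ E₁] [CompleteSpace E₁]
    (i : E₁ →L[ℝ] E) (j : E →L[ℝ] E₀)
    (hi : Function.Injective i) (hj : Function.Injective j)
    (hcompact : IsCompactOperator fun u : E₁ => j (i u))
    (θ M : ℝ) (hθ : θ ∈ Set.Ioo (0:ℝ) 1) (hM : 0 ≤ M)
    (hinterp : ∀ u : E₁, ‖i u‖ ≤ M * ‖j (i u)‖ ^ (1 - θ) * ‖u‖ ^ θ)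
    (T : ℝ) (hT : 0 < T) (p₀ p₁ : ℝ≥0∞) (hp₀ : 1 ≤ p₀) (hp₁ : 1 ≤ p₁)
    (hpθ : (1 - θ) * (p₀.toReal)⁻¹ + θ * (p₁.toReal)⁻¹ < 1 - θ)
    (R : ℝ) (hR : 0 ≤ R) (V : Set (ℝ → E₁))
    (hV : ∀ v ∈ V,
      (MemLp v p₁ (volume.restrict (Icc (0:ℝ) T)) ∧
        eLpNorm v p₁ (volume.restrict (Icc (0:ℝ) T)) ≤ ENNReal.ofReal R) ∧
      ∃ w' : ℝ → E₀,
        MemLp w' p₀ (volume.restrict (Icc (0:ℝ) T)) ∧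
        eLpNorm w' p₀ (volume.restrict (Icc (0:ℝ) T)) ≤ ENNReal.ofReal R ∧
        ∀ t ∈ Icc (0:ℝ) T,
          j (i (v t)) = j (i (v 0)) + ∫ s in (0:ℝ)..t, w' s) :
    TotallyBounded
      ((fun v : ℝ → E₁ =>
          UniformFun.ofFun (fun t : Icc (0:ℝ) T => i (v ↑t))) '' V) :=
  simon_compactness_general i j hj hcompact θ M hθ hM hinterp T hT p₀ p₁ hp₀ hp₁ hpθ R hR V hV
end
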